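/- Let C be a binary singly even self-dual code of length n ≡ 0 mod 8, and let S = C_0^⊥ \ C be its shadow. Then every vector in S has weight divisible by 4. -/

import Mathlib

/-!
Work in `ℤ[i]` with `ψ(y) = i ^ wt y`. Since `wt (a + b) = wt a + wt b - 2 |a ∩ b|`, one has
`ψ(a + b) = ψ(a) ψ(b) (-1) ^ (a ⬝ b)`. Evaluating the MacWilliams identity of the doubly even
code `C₀` at `(1, i)` gives `∑_{y ∈ C₀^⊥} ψ(y) = (1 + i) ^ n = 16 ^ (n / 8)`. On the other hand
`C₀^⊥ = C ∪ (x + C)` for any shadow vector `x`: `ψ` is a character of `C`, nontrivial because of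
a codeword of weight `2 (mod 4)`, so it sums to `0` over `C`, while the shadow condition
`x ⬝ c ≡ wt c / 2 (mod 2)` makes `ψ` constant on `x + C`. Hence
`|S| · i ^ wt x = 16 ^ (n / 8) > 0`, which forces `i ^ wt x = 1`.
-/

/-- The dual code of a binary linear code. -/
def dualCode {ι : Type*} [Fintype ι] (C : Submodule (ZMod 2) (ι → ZMod 2)) :
    Submodule (ZMod 2) (ι → ZMod 2) where
  carrier := {x | ∀ y ∈ C, ∑ i, x i * y i = 0}
  add_mem' := fun ha hb y hy => by
    simp only [Set.mem_setOf_eq] at *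
    simp only [Pi.add_apply, add_mul, Finset.sum_add_distrib, ha y hy, hb y hy, add_zero]
  zero_mem' := fun y hy => by simp
  smul_mem' := fun c x hx y hy => by
    simp only [Set.mem_setOf_eq] at *
    simp only [Pi.smul_apply, smul_eq_mul, mul_assoc, ← Finset.mul_sum, hx y hy, mul_zero]

/-- The support of a binary vector. -/
def supp {ι : Type*} [Fintype ι] (x : ι → ZMod 2) : Finset ι :=
  Finset.univ.filter fun i => x i ≠ 0

/-- The (Hamming) weight of a binary vector. -/
def wt {ι : Type*} [Fintype ι] (x : ι → ZMod 2) : ℕ := (supp x).card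

open Finset

local notation "𝕚" => (Zsqrtd.sqrtd : GaussianInt)

def signChar : AddChar (ZMod 2) GaussianInt where
  toFun a := if a = 0 then 1 else -1
  map_zero_eq_one' := rfl
  map_add_eq_mul' := by decide

lemma signChar_eq_one_iff (a : ZMod 2) : signChar a = 1 ↔ a = 0 := by
  revert a; decide

lemma signChar_of_ne_zero {a : ZMod 2} (ha : a ≠ 0) : signChar a = -1 := by
  revert a; decide

lemma signChar_sum {α : Type*} (s : Finset α) (f : α → ZMod 2) :
    signChar (∑ i ∈ s, f i) = ∏ i ∈ s, signChar (f i) := by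
  induction s using Finset.cons_induction with
  | empty => simp
  | cons a s ha ih => rw [sum_cons, prod_cons, AddChar.map_add_eq_mul, ih]

lemma add_self_eq_zero_of_zmod_two {ι : Type*} (c : ι → ZMod 2) : c + c = 0 :=
  funext fun j => CharTwo.add_self_eq_zero (c j)

lemma mem_dualCode_iff {ι : Type*} [Fintype ι] {M : Submodule (ZMod 2) (ι → ZMod 2)}
    {x : ι → ZMod 2} : x ∈ dualCode M ↔ ∀ c ∈ M, x ⬝ᵥ c = 0 :=
  Iff.rfl

lemma sqrtd_pow_eq_one_iff (m : ℕ) : 𝕚 ^ m = 1 ↔ 4 ∣ m := by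
  have : orderOf 𝕚 = 2 ^ 2 := orderOf_eq_prime_pow (p := 2) (n := 1) (by decide) (by decide)
  rw [← orderOf_dvd_iff_pow_eq_one, this]; rfl

lemma sqrtd_pow_mod_four (m : ℕ) : 𝕚 ^ m = 𝕚 ^ (m % 4) := by
  conv_lhs => rw [← Nat.mod_add_div m 4, pow_add, pow_mul]
  rw [show 𝕚 ^ 4 = 1 by decide, one_pow, mul_one]

section Weight

variable {ι : Type*} [Fintype ι]

lemma wt_eq_sum_val (y : ι → ZMod 2) : wt y = ∑ j, (y j).val := by
  have hval : ∀ a : ZMod 2, a.val = if a ≠ 0 then 1 else 0 := by decide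
  simp_rw [hval, ← card_filter]
  rfl

lemma sqrtd_pow_wt (y : ι → ZMod 2) : 𝕚 ^ wt y = ∏ j, 𝕚 ^ (y j).val := by
  rw [prod_pow_eq_pow_sum, wt_eq_sum_val]

lemma sqrtd_pow_wt_add (a b : ι → ZMod 2) :
    𝕚 ^ wt (a + b) = 𝕚 ^ wt a * 𝕚 ^ wt b * signChar (a ⬝ᵥ b) := by
  have hcoord : ∀ s t : ZMod 2, 𝕚 ^ (s + t).val = 𝕚 ^ s.val * 𝕚 ^ t.val * signChar (s * t) := by
    decide
  simp_rw [sqrtd_pow_wt, dotProduct, signChar_sum, ← prod_mul_distrib, Pi.add_apply, hcoord]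

lemma sum_sqrtd_pow_wt_mul_signChar [DecidableEq ι] (c : ι → ZMod 2) :
    ∑ y : ι → ZMod 2, 𝕚 ^ wt y * signChar (y ⬝ᵥ c)
      = (1 + 𝕚) ^ Fintype.card ι * (-𝕚) ^ wt c := by
  have hcoord : ∀ t : ZMod 2, ∑ s : ZMod 2, 𝕚 ^ s.val * signChar (s * t)
      = (1 + 𝕚) * (-𝕚) ^ t.val := by
    decide
  simp_rw [sqrtd_pow_wt, dotProduct, signChar_sum, ← prod_mul_distrib]
  rw [← Fintype.prod_sum (fun j s => 𝕚 ^ s.val * signChar (s * c j))]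
  simp_rw [hcoord, prod_mul_distrib, prod_pow_eq_pow_sum, ← wt_eq_sum_val, prod_const, card_univ]

end Weight

section Sums

variable {ι : Type*} [Fintype ι]

lemma sum_eq_zero_of_add_eq_neg {K V R : Type*} [Ring K] [AddCommGroup V] [Module K V]
    [Fintype V] [AddCommGroup R] [IsAddTorsionFree R] (M : Submodule K V) [DecidablePred (· ∈ M)]
    {u : V} (hu : u ∈ M) (f : V → R) (hf : ∀ c ∈ M, f (c + u) = -f c) :
    ∑ c with c ∈ M, f c = 0 := by
  have htrans : ∑ c with c ∈ M, f (c + u) = ∑ c with c ∈ M, f c :=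
    sum_equiv (Equiv.addRight u) (fun c => by simp [M.add_mem_iff_left hu]) fun _ _ => rfl
  rw [← self_eq_neg, ← sum_neg_distrib, ← htrans]
  exact sum_congr rfl fun c hc => hf c (mem_filter.mp hc).2

open scoped Classical in
lemma sum_signChar_dotProduct [DecidableEq ι] (M : Submodule (ZMod 2) (ι → ZMod 2))
    (y : ι → ZMod 2) :
    ∑ c with c ∈ M, signChar (y ⬝ᵥ c)
      = if y ∈ dualCode M then (#{c | c ∈ M} : GaussianInt) else 0 := by
  split_ifs with hy
  · rw [sum_congr rfl fun c hc => by
      rw [mem_dualCode_iff.1 hy c (mem_filter.mp hc).2, AddChar.map_zero_eq_one]]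
    simp
  · obtain ⟨u, hu, hyu⟩ : ∃ u ∈ M, y ⬝ᵥ u ≠ 0 := by simpa [mem_dualCode_iff] using hy
    refine sum_eq_zero_of_add_eq_neg M hu _ fun c _ => ?_
    rw [dotProduct_add, AddChar.map_add_eq_mul, signChar_of_ne_zero hyu, mul_neg_one]

-- The MacWilliams identity for `M`, evaluated at the point `(1, i)`.
open scoped Classical in
lemma card_mul_sum_dual_sqrtd_pow_wt [DecidableEq ι] (M : Submodule (ZMod 2) (ι → ZMod 2)) :
    #{c | c ∈ M} * ∑ y with y ∈ dualCode M, 𝕚 ^ wt y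
      = (1 + 𝕚) ^ Fintype.card ι * ∑ c with c ∈ M, (-𝕚) ^ wt c := by
  calc #{c | c ∈ M} * ∑ y with y ∈ dualCode M, 𝕚 ^ wt y
      = ∑ y, 𝕚 ^ wt y * ∑ c with c ∈ M, signChar (y ⬝ᵥ c) := by
        simp_rw [sum_signChar_dotProduct, mul_ite, mul_zero, ← sum_filter, mul_sum, mul_comm]
    _ = ∑ c with c ∈ M, ∑ y, 𝕚 ^ wt y * signChar (y ⬝ᵥ c) := by
        simp_rw [mul_sum]
        exact sum_comm
    _ = _ := by simp_rw [sum_sqrtd_pow_wt_mul_signChar, ← mul_sum]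

open scoped Classical in
lemma sum_dual_sqrtd_pow_wt_of_doublyEven [DecidableEq ι] (M : Submodule (ZMod 2) (ι → ZMod 2))
    (hM : ∀ c ∈ M, 4 ∣ wt c) :
    ∑ y with y ∈ dualCode M, 𝕚 ^ wt y = (1 + 𝕚) ^ Fintype.card ι := by
  have h := card_mul_sum_dual_sqrtd_pow_wt M
  have hterm : ∀ c ∈ ({c | c ∈ M} : Finset _), (-𝕚) ^ wt c = 1 := fun c hc => by
    have h4 := hM c (mem_filter.mp hc).2
    rw [Even.neg_pow (even_iff_two_dvd.2 ((by norm_num : 2 ∣ 4).trans h4)), sqrtd_pow_eq_one_iff]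
    exact h4
  rw [sum_congr rfl hterm, sum_const, nsmul_one, mul_comm _ (#{c | c ∈ M} : GaussianInt)] at h
  have hM0 : #{c | c ∈ M} ≠ 0 := card_ne_zero_of_mem (mem_filter.2 ⟨mem_univ _, M.zero_mem⟩)
  exact mul_left_cancel₀ (Nat.cast_ne_zero.2 hM0) h

end Sums

section SelfDual

variable {ι : Type*} [Fintype ι] {C C0 : Submodule (ZMod 2) (ι → ZMod 2)}

lemma sq_sqrtd_pow_wt_eq_one {c : ι → ZMod 2} (hc : c ⬝ᵥ c = 0) : (𝕚 ^ wt c) ^ 2 = 1 := by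
  have h := sqrtd_pow_wt_add c c
  rwa [add_self_eq_zero_of_zmod_two, hc, AddChar.map_zero_eq_one, mul_one, ← sq,
    show wt (0 : ι → ZMod 2) = 0 by simp [wt, supp], pow_zero, eq_comm] at h

lemma sqrtd_pow_wt_eq_neg_one (hC : C ≤ dualCode C) {c : ι → ZMod 2} (hc : c ∈ C)
    (hc4 : ¬ 4 ∣ wt c) : 𝕚 ^ wt c = -1 :=
  (sq_eq_one_iff.mp (sq_sqrtd_pow_wt_eq_one (mem_dualCode_iff.1 (hC hc) c hc))).resolve_left
    (mt (sqrtd_pow_eq_one_iff _).mp hc4)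

lemma sum_sqrtd_pow_wt_eq_zero [DecidableEq ι] [DecidablePred (· ∈ C)] (hC : C ≤ dualCode C)
    {u : ι → ZMod 2} (hu : u ∈ C) (hwu : 𝕚 ^ wt u = -1) : ∑ c with c ∈ C, 𝕚 ^ wt c = 0 :=
  sum_eq_zero_of_add_eq_neg C hu _ fun c hc => by
    rw [sqrtd_pow_wt_add, hwu, mem_dualCode_iff.1 (hC hc) u hu, AddChar.map_zero_eq_one]
    ring

lemma add_mem_of_not_four_dvd (hC : C ≤ dualCode C) (hC0 : ∀ c, c ∈ C0 ↔ c ∈ C ∧ 4 ∣ wt c)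
    {a b : ι → ZMod 2} (ha : a ∈ C) (hb : b ∈ C) (ha4 : ¬ 4 ∣ wt a) (hb4 : ¬ 4 ∣ wt b) :
    a + b ∈ C0 := by
  refine (hC0 _).2 ⟨C.add_mem ha hb, (sqrtd_pow_eq_one_iff _).1 ?_⟩
  rw [sqrtd_pow_wt_add, sqrtd_pow_wt_eq_neg_one hC ha ha4, sqrtd_pow_wt_eq_neg_one hC hb hb4,
    mem_dualCode_iff.1 (hC ha) b hb, AddChar.map_zero_eq_one]
  ring

-- The shadow condition `x ⬝ c ≡ wt c / 2 (mod 2)` on `C`, with `i ^ wt c = ±1` encoding `wt c / 2`.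
lemma signChar_dotProduct_eq_sqrtd_pow_wt (hC : C = dualCode C)
    (hC0 : ∀ c, c ∈ C0 ↔ c ∈ C ∧ 4 ∣ wt c) {x : ι → ZMod 2} (hx : x ∈ dualCode C0)
    (hxC : x ∉ C) {c : ι → ZMod 2} (hc : c ∈ C) : signChar (x ⬝ᵥ c) = 𝕚 ^ wt c := by
  by_cases hc4 : 4 ∣ wt c
  · rw [mem_dualCode_iff.1 hx c ((hC0 c).2 ⟨hc, hc4⟩), AddChar.map_zero_eq_one,
      (sqrtd_pow_eq_one_iff _).2 hc4]
  obtain ⟨c', hc', hxc'⟩ : ∃ c' ∈ C, x ⬝ᵥ c' ≠ 0 := by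
    rw [hC] at hxC
    simpa [mem_dualCode_iff] using hxC
  have hc'4 : ¬ 4 ∣ wt c' := fun h => hxc' (hx c' ((hC0 c').2 ⟨hc', h⟩))
  have hxcc' : x ⬝ᵥ (c + c') = 0 := hx _ (add_mem_of_not_four_dvd hC.le hC0 hc hc' hc4 hc'4)
  rw [dotProduct_add, add_eq_zero_iff_eq_neg, CharTwo.neg_eq] at hxcc'
  rw [hxcc', signChar_of_ne_zero hxc', sqrtd_pow_wt_eq_neg_one hC.le hc hc4]

lemma add_mem_of_signChar_dotProduct_eq (hC : C = dualCode C) {x y : ι → ZMod 2}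
    (hx : ∀ c ∈ C, signChar (x ⬝ᵥ c) = 𝕚 ^ wt c) (hy : ∀ c ∈ C, signChar (y ⬝ᵥ c) = 𝕚 ^ wt c) :
    x + y ∈ C := by
  rw [hC]
  refine mem_dualCode_iff.2 fun c hc => ?_
  rw [← signChar_eq_one_iff, add_dotProduct, AddChar.map_add_eq_mul, hx c hc, hy c hc, ← sq,
    sq_sqrtd_pow_wt_eq_one (mem_dualCode_iff.1 (hC.le hc) c hc)]

lemma sqrtd_pow_wt_add_of_signChar_dotProduct_eq (hC : C ≤ dualCode C) {x : ι → ZMod 2}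
    (hx : ∀ c ∈ C, signChar (x ⬝ᵥ c) = 𝕚 ^ wt c) {c : ι → ZMod 2} (hc : c ∈ C) :
    𝕚 ^ wt (x + c) = 𝕚 ^ wt x := by
  rw [sqrtd_pow_wt_add, hx c hc, mul_assoc, ← sq,
    sq_sqrtd_pow_wt_eq_one (mem_dualCode_iff.1 (hC hc) c hc), mul_one]

open scoped Classical in
lemma sum_dual_sqrtd_pow_wt_eq_card_shadow_mul [DecidableEq ι] (hC : C = dualCode C)
    (hC0 : ∀ c, c ∈ C0 ↔ c ∈ C ∧ 4 ∣ wt c) {u : ι → ZMod 2} (hu : u ∈ C) (hwu : 𝕚 ^ wt u = -1)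
    {x : ι → ZMod 2} (hx : x ∈ dualCode C0) (hxC : x ∉ C) :
    ∑ y with y ∈ dualCode C0, 𝕚 ^ wt y = #{y | y ∈ dualCode C0 ∧ y ∉ C} * 𝕚 ^ wt x := by
  have hCD : ∀ c ∈ C, c ∈ dualCode C0 := fun c hc =>
    mem_dualCode_iff.2 fun c' hc' => mem_dualCode_iff.1 (hC.le hc) c' ((hC0 c').1 hc').1
  have hshadow : ∀ y ∈ dualCode C0, y ∉ C → ∀ c ∈ C, signChar (y ⬝ᵥ c) = 𝕚 ^ wt c :=
    fun y hy hyC _ hc => signChar_dotProduct_eq_sqrtd_pow_wt hC hC0 hy hyC hc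
  rw [← sum_filter_add_sum_filter_not _ (· ∈ C), filter_filter, filter_filter,
    filter_congr fun y _ => and_iff_right_of_imp (hCD y), sum_sqrtd_pow_wt_eq_zero hC.le hu hwu,
    zero_add, ← nsmul_eq_mul, ← sum_const]
  refine sum_congr rfl fun y hy => ?_
  obtain ⟨hyD, hyC⟩ := (mem_filter.1 hy).2
  have hxy := add_mem_of_signChar_dotProduct_eq hC (hshadow x hx hxC) (hshadow y hyD hyC)
  calc 𝕚 ^ wt y = 𝕚 ^ wt (x + (x + y)) := by
        rw [← add_assoc, add_self_eq_zero_of_zmod_two, zero_add]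
    _ = 𝕚 ^ wt x := sqrtd_pow_wt_add_of_signChar_dotProduct_eq hC.le (hshadow x hx hxC) hxy

end SelfDual

lemma four_dvd_of_natCast_mul_sqrtd_pow_eq {N M m : ℕ} (hM : M ≠ 0)
    (h : (N : GaussianInt) * 𝕚 ^ m = M) : 4 ∣ m := by
  rw [sqrtd_pow_mod_four] at h
  have hre := congrArg Zsqrtd.re h
  have hm : m % 4 < 4 := Nat.mod_lt _ (by norm_num)
  interval_cases hr : m % 4
  · exact Nat.dvd_of_mod_eq_zero hr
  all_goals simp [pow_succ] at hre; omega

/-- If `C` is a singly even self-dual code of length `n ≡ 0 (mod 8)` with doubly even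
subcode `C0`, then every vector of the shadow `C0^⊥ \ C` has weight divisible by 4. -/
theorem stmt_12 {n : ℕ} (hn : 8 ∣ n)
    (C C0 : Submodule (ZMod 2) (Fin n → ZMod 2))
    (hC : C = dualCode C)
    (hse : ∃ x ∈ C, wt x % 4 = 2)
    (hC0 : (C0 : Set (Fin n → ZMod 2)) = {x | x ∈ C ∧ 4 ∣ wt x}) :
    ∀ x, x ∈ dualCode C0 → x ∉ C → 4 ∣ wt x := by
  classical
  intro x hx hxC
  obtain ⟨u, hu, hwu⟩ := hse
  obtain ⟨k, rfl⟩ := hn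
  have hC0' : ∀ c, c ∈ C0 ↔ c ∈ C ∧ 4 ∣ wt c := fun c => Set.ext_iff.mp hC0 c
  have hu' : 𝕚 ^ wt u = -1 := by rw [sqrtd_pow_mod_four, hwu]; decide
  have key := sum_dual_sqrtd_pow_wt_of_doublyEven C0 fun c hc => ((hC0' c).1 hc).2
  rw [sum_dual_sqrtd_pow_wt_eq_card_shadow_mul hC hC0' hu hu' hx hxC, Fintype.card_fin, pow_mul,
    show (1 + 𝕚) ^ 8 = 16 by decide] at key
  exact four_dvd_of_natCast_mul_sqrtd_pow_eq (M := 16 ^ k) (by positivity) (by exact_mod_cast key)
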